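/- arXiv:2109.08952 — 4 statements merged into one kernel-verified Lean document; each statement's English description precedes it below -/
import Mathlib

section
/- Let B ∈ 𝔰𝔭(2n, ℝ), let J be a compatible complex structure on (ℝ^{2n}, Ω₀), let ε ∈ {1, −1}, set L = ε·exp(2πB) and 𝐉(x) = exp(−xB)·J·exp(xB). Suppose I₀ is a real 2n×2n matrix with I₀² = I_{2n}, I₀·B = B·I₀, and I₀·J = −J·I₀. If σ ∈ ℝ and s : ℝ → ℂ^{2n} is a smooth L-equivariant map with 𝐉(x)·s′(x) = σ·s(x) for all x, then t(x) := I₀·s(x) is a smooth L-equivariant map with 𝐉(x)·t′(x) = −σ·t(x), and t is nonzero whenever s is nonzero. In particular, σ is an eigenvalue of the operator s ↦ 𝐉·s′ on smooth L-equivariant maps if and only if −σ is. -/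
open Matrix Real NormedSpace

/-- The standard symplectic form `Ω₀` on `ℝ^{2n}`, as the block matrix `((0, Iₙ), (−Iₙ, 0))`. -/
def Omega0 (n : ℕ) : Matrix (Fin n ⊕ Fin n) (Fin n ⊕ Fin n) ℝ :=
  Matrix.fromBlocks 0 1 (-1) 0

/-- A compatible complex structure on `(ℝ^{2n}, Ω₀)`. -/
def IsCompatibleComplexStructure (n : ℕ) (J : Matrix (Fin n ⊕ Fin n) (Fin n ⊕ Fin n) ℝ) :
    Prop :=
  J * J = -1 ∧ Jᵀ * Omega0 n * J = Omega0 n ∧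
    ∀ v : Fin n ⊕ Fin n → ℝ, v ≠ 0 → 0 < v ⬝ᵥ (Omega0 n *ᵥ (J *ᵥ v))

/-- `L`-equivariance for a map `s : ℝ → ℂ^{2n}`: `s(x + 2π) = L⁻¹ s(x)`. -/
def IsEquivariant {n : ℕ} (L : Matrix (Fin n ⊕ Fin n) (Fin n ⊕ Fin n) ℝ)
    (s : ℝ → (Fin n ⊕ Fin n → ℂ)) : Prop :=
  ∀ x : ℝ, s (x + 2 * π) = (L⁻¹).map Complex.ofReal *ᵥ s x

/-- The eigen-equation `𝐉(x)·s′(x) = σ·s(x)` with `𝐉(x) = exp(−xB)·J·exp(xB)`. -/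
def IsEigenSection {n : ℕ} (B J : Matrix (Fin n ⊕ Fin n) (Fin n ⊕ Fin n) ℝ) (σ : ℝ)
    (s : ℝ → (Fin n ⊕ Fin n → ℂ)) : Prop :=
  ∀ x : ℝ,
    ((exp ((-x) • B) * J * exp (x • B)).map Complex.ofReal) *ᵥ deriv s x = (σ : ℂ) • s x

/-- If `I₀` is an involution commuting with `B` and anticommuting with `J`,
then `t = I₀·s` turns smooth `L`-equivariant eigen-sections for eigenvalue `σ` into smooth
`L`-equivariant eigen-sections for `−σ`, preserving nonvanishing; in particular `σ` is an
eigenvalue of `A_𝐉` iff `−σ` is. -/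
theorem sign_symmetry_of_spectrum {n : ℕ}
    (B J : Matrix (Fin n ⊕ Fin n) (Fin n ⊕ Fin n) ℝ)
    (hB : Bᵀ * Omega0 n + Omega0 n * B = 0)
    (hJ : IsCompatibleComplexStructure n J)
    (ε : ℝ) (hε : ε = 1 ∨ ε = -1)
    (I₀ : Matrix (Fin n ⊕ Fin n) (Fin n ⊕ Fin n) ℝ)
    (hI₀sq : I₀ * I₀ = 1) (hI₀B : I₀ * B = B * I₀) (hI₀J : I₀ * J = -(J * I₀)) :
    (∀ (σ : ℝ) (s : ℝ → (Fin n ⊕ Fin n → ℂ)),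
      ContDiff ℝ (⊤ : ℕ∞) s → IsEquivariant (ε • exp ((2 * π) • B)) s → IsEigenSection B J σ s →
        ContDiff ℝ (⊤ : ℕ∞) (fun x => I₀.map Complex.ofReal *ᵥ s x) ∧
        IsEquivariant (ε • exp ((2 * π) • B)) (fun x => I₀.map Complex.ofReal *ᵥ s x) ∧
        IsEigenSection B J (-σ) (fun x => I₀.map Complex.ofReal *ᵥ s x) ∧
        (s ≠ 0 → (fun x => I₀.map Complex.ofReal *ᵥ s x) ≠ 0)) ∧
    (∀ σ : ℝ,
      (∃ s : ℝ → (Fin n ⊕ Fin n → ℂ), s ≠ 0 ∧ ContDiff ℝ (⊤ : ℕ∞) s ∧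
          IsEquivariant (ε • exp ((2 * π) • B)) s ∧ IsEigenSection B J σ s) ↔
      (∃ s : ℝ → (Fin n ⊕ Fin n → ℂ), s ≠ 0 ∧ ContDiff ℝ (⊤ : ℕ∞) s ∧
          IsEquivariant (ε • exp ((2 * π) • B)) s ∧ IsEigenSection B J (-σ) s)) := by

  classical
  -- abbreviations
  set M : Matrix (Fin n ⊕ Fin n) (Fin n ⊕ Fin n) ℂ := I₀.map Complex.ofReal with hMdef
  have hmul : ∀ A C : Matrix (Fin n ⊕ Fin n) (Fin n ⊕ Fin n) ℝ,
      (A * C).map Complex.ofReal = A.map Complex.ofReal * C.map Complex.ofReal := fun A C =>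
    Matrix.map_mul (f := Complex.ofRealHom)
  have hneg : ∀ A : Matrix (Fin n ⊕ Fin n) (Fin n ⊕ Fin n) ℝ,
      (-A).map Complex.ofReal = -(A.map Complex.ofReal) := fun A => by
    ext i j; simp
  have hMM : M * M = 1 := by
    rw [hMdef, ← hmul, hI₀sq]
    exact Matrix.map_one _ Complex.ofReal_zero Complex.ofReal_one
  -- I₀ commutes with all exp(c • B)
  have hcomm : ∀ c : ℝ, I₀ * exp (c • B) = exp (c • B) * I₀ := fun c =>
    ((((show Commute I₀ B from hI₀B)).smul_right c).exp_right).eq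
  set L : Matrix (Fin n ⊕ Fin n) (Fin n ⊕ Fin n) ℝ := ε • exp ((2 * π) • B) with hLdef
  have hcL : I₀ * L = L * I₀ := by
    rw [hLdef, mul_smul_comm, smul_mul_assoc, hcomm]
  have hεsq : ε * ε = 1 := by rcases hε with h | h <;> rw [h] <;> norm_num
  have hLunit : IsUnit L := by
    have hε1 : (ε • (1 : Matrix (Fin n ⊕ Fin n) (Fin n ⊕ Fin n) ℝ)) *
        (ε • (1 : Matrix (Fin n ⊕ Fin n) (Fin n ⊕ Fin n) ℝ)) = 1 := by
      rw [smul_mul_assoc, one_mul, smul_smul, hεsq, one_smul]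
    have h1 : IsUnit (ε • (1 : Matrix (Fin n ⊕ Fin n) (Fin n ⊕ Fin n) ℝ)) :=
      ⟨⟨_, _, hε1, hε1⟩, rfl⟩
    have h2 : L = (ε • 1) * exp ((2 * π) • B) := by
      rw [hLdef, smul_mul_assoc, one_mul]
    rw [h2]
    exact h1.mul (Matrix.isUnit_exp _)
  have hLdet : IsUnit L.det := (Matrix.isUnit_iff_isUnit_det L).mp hLunit
  have hcLinv : I₀ * L⁻¹ = L⁻¹ * I₀ := by
    calc I₀ * L⁻¹ = L⁻¹ * L * I₀ * L⁻¹ := by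
          rw [Matrix.nonsing_inv_mul L hLdet, one_mul]
      _ = L⁻¹ * (I₀ * L) * L⁻¹ := by rw [hcL]; noncomm_ring
      _ = L⁻¹ * I₀ * (L * L⁻¹) := by noncomm_ring
      _ = L⁻¹ * I₀ := by rw [Matrix.mul_nonsing_inv L hLdet, mul_one]
  -- the continuous linear map given by M
  let e : (Fin n ⊕ Fin n → ℂ) →L[ℝ] (Fin n ⊕ Fin n → ℂ) :=
    LinearMap.toContinuousLinearMap ((Matrix.mulVecLin M).restrictScalars ℝ)
  have he : ∀ v, e v = M *ᵥ v := fun v => rfl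
  -- the key anticommutation of 𝐉(x) with I₀
  have hKI : ∀ x : ℝ,
      (exp ((-x) • B) * J * exp (x • B)) * I₀
        = -(I₀ * (exp ((-x) • B) * J * exp (x • B))) := by
    intro x
    have hJI : J * I₀ = -(I₀ * J) := by rw [hI₀J, neg_neg]
    calc exp ((-x) • B) * J * exp (x • B) * I₀
        = exp ((-x) • B) * J * (I₀ * exp (x • B)) := by rw [hcomm x]; noncomm_ring
      _ = exp ((-x) • B) * (J * I₀) * exp (x • B) := by noncomm_ring
      _ = -(exp ((-x) • B) * I₀ * (J * exp (x • B))) := by rw [hJI]; noncomm_ring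
      _ = -(I₀ * exp ((-x) • B) * (J * exp (x • B))) := by rw [hcomm (-x)]
      _ = -(I₀ * (exp ((-x) • B) * J * exp (x • B))) := by noncomm_ring
  have key : ∀ (σ : ℝ) (s : ℝ → (Fin n ⊕ Fin n → ℂ)),
      ContDiff ℝ (⊤ : ℕ∞) s → IsEquivariant (ε • exp ((2 * π) • B)) s → IsEigenSection B J σ s →
        ContDiff ℝ (⊤ : ℕ∞) (fun x => I₀.map Complex.ofReal *ᵥ s x) ∧
        IsEquivariant (ε • exp ((2 * π) • B)) (fun x => I₀.map Complex.ofReal *ᵥ s x) ∧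
        IsEigenSection B J (-σ) (fun x => I₀.map Complex.ofReal *ᵥ s x) ∧
        (s ≠ 0 → (fun x => I₀.map Complex.ofReal *ᵥ s x) ≠ 0) := by
    intro σ s hs hequiv heig
    have hsmooth : ContDiff ℝ (⊤ : ℕ∞) (fun x => M *ᵥ s x) := by
      have : (fun x => M *ᵥ s x) = fun x => e (s x) := by funext x; rw [he]
      rw [this]
      exact e.contDiff.comp hs
    have hderiv : ∀ x : ℝ, deriv (fun y => M *ᵥ s y) x = M *ᵥ deriv s x := by
      intro x
      have h1 : HasDerivAt s (deriv s x) x := ((hs.differentiable (by simp)) x).hasDerivAt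
      have h2 := (e.hasFDerivAt (x := s x)).comp_hasDerivAt x h1
      have h3 : HasDerivAt (fun y => M *ᵥ s y) (M *ᵥ deriv s x) x := by
        exact h2
      exact h3.deriv
    refine ⟨hsmooth, ?_, ?_, ?_⟩
    · -- equivariance
      intro x
      show M *ᵥ s (x + 2 * π) = (L⁻¹).map Complex.ofReal *ᵥ (M *ᵥ s x)
      rw [hequiv x, Matrix.mulVec_mulVec, Matrix.mulVec_mulVec, hMdef, ← hmul, ← hmul,
        hcLinv]
    · -- eigen-equation
      intro x
      show (exp ((-x) • B) * J * exp (x • B)).map Complex.ofReal *ᵥ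
          deriv (fun y => M *ᵥ s y) x = ((-σ : ℝ) : ℂ) • (M *ᵥ s x)
      rw [hderiv x, Matrix.mulVec_mulVec, ← hmul, hKI x, hneg, hmul, Matrix.neg_mulVec,
        ← Matrix.mulVec_mulVec, heig x]
      have : M *ᵥ ((σ : ℂ) • s x) = (σ : ℂ) • (M *ᵥ s x) := by
        rw [Matrix.mulVec_smul]
      rw [this]
      push_cast
      module
    · -- nonvanishing
      intro hne h0
      apply hne
      funext x
      have hx : M *ᵥ s x = 0 := congrFun h0 x
      have := congrArg (fun v => M *ᵥ v) hx
      simpa [Matrix.mulVec_mulVec, hMM, Matrix.one_mulVec, Matrix.mulVec_zero] using this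
  refine ⟨key, fun σ => ⟨?_, ?_⟩⟩
  · rintro ⟨s, hne, hs, hequiv, heig⟩
    obtain ⟨h1, h2, h3, h4⟩ := key σ s hs hequiv heig
    exact ⟨_, h4 hne, h1, h2, h3⟩
  · rintro ⟨s, hne, hs, hequiv, heig⟩
    obtain ⟨h1, h2, h3, h4⟩ := key (-σ) s hs hequiv heig
    rw [neg_neg] at h3
    exact ⟨_, h4 hne, h1, h2, h3⟩
end

section
/- Let λ > 0 with λ ≠ 1, let J₀ = ((0, −1), (1, 0)), and let B = (log λ / 2π)·diag(1, −1), so that L = exp(2πB) = diag(λ, 1/λ). Then for σ ∈ ℝ, there exists a nonzero e ∈ ℂ² with exp(2π(−σJ₀ + B))·e = e if and only if there exists k ∈ ℤ with 4π²σ² = (log λ)² + 4π²k², i.e. σ = ±(1/2π)·((log λ)² + (2πk)²)^{1/2} for some integer k ≥ 0. In particular, the set of such σ is symmetric under σ ↦ −σ. -/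
open Matrix Real NormedSpace

/-- The standard `2×2` complex structure `J₀ = ((0, −1), (1, 0))`. -/
def J0 : Matrix (Fin 2) (Fin 2) ℝ := !![0, -1; 1, 0]

attribute [local instance] Matrix.linftyOpNormedRing Matrix.linftyOpNormedAlgebra

private lemma pow_mulVec_eigen (A : Matrix (Fin 2) (Fin 2) ℂ) (e : Fin 2 → ℂ) (μ : ℂ)
    (h : A *ᵥ e = μ • e) : ∀ n : ℕ, (A ^ n) *ᵥ e = (μ ^ n) • e := by
  intro n
  induction n with
  | zero => simp
  | succ n ih =>
      rw [pow_succ', ← Matrix.mulVec_mulVec, ih, Matrix.mulVec_smul, h, smul_smul, pow_succ', mul_comm]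

private lemma exp_mulVec_eigen (A : Matrix (Fin 2) (Fin 2) ℂ) (e : Fin 2 → ℂ) (μ : ℂ)
    (h : A *ᵥ e = μ • e) : exp A *ᵥ e = Complex.exp μ • e := by
  classical
  let f : Matrix (Fin 2) (Fin 2) ℂ →ₗ[ℂ] (Fin 2 → ℂ) :=
    { toFun := fun M => M *ᵥ e
      map_add' := fun M N => Matrix.add_mulVec M N e
      map_smul' := fun c M => Matrix.smul_mulVec c M e }
  let F : Matrix (Fin 2) (Fin 2) ℂ →L[ℂ] (Fin 2 → ℂ) := f.toContinuousLinearMap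
  have hF : ∀ M : Matrix (Fin 2) (Fin 2) ℂ, F M = M *ᵥ e := fun _ => rfl
  have h1 : exp A *ᵥ e = F (∑' n : ℕ, (n.factorial⁻¹ : ℂ) • A ^ n) := by
    rw [hF, exp_eq_tsum ℂ]
  rw [h1, F.map_tsum (expSeries_summable' (𝕂 := ℂ) A)]
  have h2 : ∀ n : ℕ, F ((n.factorial⁻¹ : ℂ) • A ^ n)
      = ((n.factorial⁻¹ : ℂ) * μ ^ n) • e := by
    intro n
    rw [F.map_smul, hF, pow_mulVec_eigen A e μ h n, smul_smul]
  simp_rw [h2]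
  rw [Summable.tsum_smul_const]
  · congr 1
    rw [Complex.exp_eq_exp_ℂ, exp_eq_tsum ℂ]
    simp [smul_eq_mul]
  · have := expSeries_summable' (𝕂 := ℂ) (𝔸 := ℂ) μ
    simpa [smul_eq_mul] using this

private lemma eig_decomp (A : Matrix (Fin 2) (Fin 2) ℂ) (e : Fin 2 → ℂ) (μ : ℂ) (hμ : μ ≠ 0)
    (hAA : A *ᵥ (A *ᵥ e) = (μ ^ 2) • e) :
    ∃ ep em : Fin 2 → ℂ, e = ep + em ∧ A *ᵥ ep = μ • ep ∧ A *ᵥ em = (-μ) • em := by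
  refine ⟨(2 * μ)⁻¹ • (μ • e + A *ᵥ e), (2 * μ)⁻¹ • (μ • e - A *ᵥ e), ?_, ?_, ?_⟩
  · rw [← smul_add]
    have h1 : μ • e + A *ᵥ e + (μ • e - A *ᵥ e) = (2 * μ) • e := by module
    rw [h1, smul_smul, inv_mul_cancel₀ (mul_ne_zero two_ne_zero hμ), one_smul]
  · rw [Matrix.mulVec_smul, Matrix.mulVec_add, Matrix.mulVec_smul, hAA]
    match_scalars <;> ring
  · rw [Matrix.mulVec_smul, Matrix.mulVec_sub, Matrix.mulVec_smul, hAA]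
    match_scalars <;> ring

private lemma key (b a : ℝ) (hb : b ≠ 0) :
    (∃ e : Fin 2 → ℂ, e ≠ 0 ∧
      exp (!![((b : ℝ) : ℂ), ((a : ℝ) : ℂ); -((a : ℝ) : ℂ), -((b : ℝ) : ℂ)]) *ᵥ e = e) ↔
    ∃ k : ℤ, a ^ 2 = b ^ 2 + 4 * π ^ 2 * (k : ℝ) ^ 2 := by
  set A : Matrix (Fin 2) (Fin 2) ℂ :=
    !![((b : ℝ) : ℂ), ((a : ℝ) : ℂ); -((a : ℝ) : ℂ), -((b : ℝ) : ℂ)] with hA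
  have hAsq : ∀ x : Fin 2 → ℂ, A *ᵥ (A *ᵥ x) = (((b : ℂ) ^ 2 - (a : ℂ) ^ 2)) • x := by
    intro x
    rw [Matrix.mulVec_mulVec]
    have : A * A = ((b : ℂ) ^ 2 - (a : ℂ) ^ 2) • (1 : Matrix (Fin 2) (Fin 2) ℂ) := by
      ext i j
      fin_cases i <;> fin_cases j <;>
        simp [hA, Matrix.mul_apply, Fin.sum_univ_two, Matrix.one_apply] <;> ring
    rw [this, Matrix.smul_mulVec, Matrix.one_mulVec]
  constructor
  · rintro ⟨e, he, hfix⟩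
    by_cases hc : b ^ 2 - a ^ 2 = 0
    · exact ⟨0, by push_cast; linarith⟩
    · set c : ℂ := (b : ℂ) ^ 2 - (a : ℂ) ^ 2 with hcdef
      have hc0 : c ≠ 0 := by
        simp only [hcdef]
        intro h
        apply hc
        have : ((b ^ 2 - a ^ 2 : ℝ) : ℂ) = 0 := by push_cast; linear_combination h
        exact_mod_cast this
      set μ : ℂ := Complex.exp (Complex.log c / 2) with hμdef
      have hμ0 : μ ≠ 0 := Complex.exp_ne_zero _
      have hμsq : μ ^ 2 = c := by
        rw [hμdef, sq, ← Complex.exp_add,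
          show Complex.log c / 2 + Complex.log c / 2 = Complex.log c by ring,
          Complex.exp_log hc0]
      obtain ⟨ep, em, hsum, hep, hem⟩ := eig_decomp A e μ hμ0 (by rw [hAsq, hμsq])
      have hfix2 : Complex.exp μ • ep + Complex.exp (-μ) • em = ep + em := by
        rw [← exp_mulVec_eigen A ep μ hep, ← exp_mulVec_eigen A em (-μ) hem,
          ← Matrix.mulVec_add, ← hsum, hfix, hsum]
      have h0 : (Complex.exp μ - 1) • ep + (Complex.exp (-μ) - 1) • em = 0 := by
        rw [sub_smul, sub_smul, one_smul, one_smul, sub_add_sub_comm, hfix2, sub_self]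
      have hone : Complex.exp μ = 1 ∨ Complex.exp (-μ) = 1 := by
        by_contra hcon
        push_neg at hcon
        obtain ⟨h1, h2⟩ := hcon
        have hA0 := congrArg (fun v => A *ᵥ v) h0
        simp only [Matrix.mulVec_add, Matrix.mulVec_smul, hep, hem, Matrix.mulVec_zero] at hA0
        have hme : (2 * μ * (Complex.exp (-μ) - 1)) • em = 0 := by
          have lhs_eq : (2 * μ * (Complex.exp (-μ) - 1)) • em
              = μ • ((Complex.exp μ - 1) • ep + (Complex.exp (-μ) - 1) • em)
                - ((Complex.exp μ - 1) • μ • ep + (Complex.exp (-μ) - 1) • -μ • em) := by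
            module
          rw [lhs_eq, h0, hA0, smul_zero, sub_zero]
        have hem0 : em = 0 := by
          rcases smul_eq_zero.mp hme with h | h
          · exact absurd h (mul_ne_zero (mul_ne_zero two_ne_zero hμ0) (sub_ne_zero.mpr h2))
          · exact h
        have hep0 : ep = 0 := by
          rw [hem0, smul_zero, add_zero] at h0
          rcases smul_eq_zero.mp h0 with h | h
          · exact absurd h (sub_ne_zero.mpr h1)
          · exact h
        exact he (by rw [hsum, hep0, hem0, add_zero])
      obtain ⟨n, hn⟩ : ∃ n : ℤ, μ ^ 2 = -(4 * (π : ℂ) ^ 2 * (n : ℂ) ^ 2) := by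
        rcases hone with h | h
        · obtain ⟨n, hn⟩ := Complex.exp_eq_one_iff.mp h
          refine ⟨n, ?_⟩
          rw [hn, mul_pow, mul_pow, mul_pow, Complex.I_sq]
          ring
        · obtain ⟨n, hn⟩ := Complex.exp_eq_one_iff.mp h
          refine ⟨n, ?_⟩
          rw [← neg_sq, hn, mul_pow, mul_pow, mul_pow, Complex.I_sq]
          ring
      refine ⟨n, ?_⟩
      have hC : ((a ^ 2 - b ^ 2 - 4 * π ^ 2 * (n : ℝ) ^ 2 : ℝ) : ℂ) = 0 := by
        push_cast
        linear_combination hμsq - hn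
      have : (a ^ 2 - b ^ 2 - 4 * π ^ 2 * (n : ℝ) ^ 2 : ℝ) = 0 := by exact_mod_cast hC
      linarith
  · rintro ⟨k, hk⟩
    have ha0 : a ≠ 0 := by
      intro h
      rw [h] at hk
      nlinarith [sq_nonneg (k : ℝ), sq_nonneg b, sq_abs b, pow_pos (abs_pos.mpr hb) 2]
    set μ : ℂ := (k : ℂ) * (2 * (π : ℂ) * Complex.I) with hμdef
    have hμsq : μ ^ 2 = (b : ℂ) ^ 2 - (a : ℂ) ^ 2 := by
      have hkC : ((a : ℂ)) ^ 2 = (b : ℂ) ^ 2 + 4 * (π : ℂ) ^ 2 * (k : ℂ) ^ 2 := by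
        have := congrArg (Complex.ofReal) hk
        push_cast at this ⊢
        linear_combination this
      rw [hμdef, mul_pow, mul_pow, mul_pow, Complex.I_sq]
      linear_combination hkC
    refine ⟨![(a : ℂ), μ - (b : ℂ)], ?_, ?_⟩
    · intro h
      have := congrFun h 0
      simp at this
      exact ha0 this
    · have heig : A *ᵥ ![(a : ℂ), μ - (b : ℂ)] = μ • ![(a : ℂ), μ - (b : ℂ)] := by
        ext i
        fin_cases i <;>
          simp [hA, Matrix.mulVec, dotProduct, Fin.sum_univ_two]
        · ring
        · linear_combination - hμsq
      rw [exp_mulVec_eigen A _ μ heig, Complex.exp_eq_one_iff.mpr ⟨k, by rw [hμdef]⟩, one_smul]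

/-- **hyperbolic case, `n = 1`.** With `B = (log λ/2π)·diag(1, −1)` (so
`exp(2πB) = diag(λ, 1/λ)`), for `σ ∈ ℝ` the matrix `exp(2π(−σJ₀ + B))` has a nonzero fixed
vector in `ℂ²` iff `4π²σ² = (log λ)² + 4π²k²` for some `k ∈ ℤ`; in particular the set of such
`σ` is symmetric under `σ ↦ −σ`. -/
theorem hyperbolic_eigenvalue_equation (lam : ℝ) (hlam : 0 < lam) (hlam1 : lam ≠ 1) :
    exp ((2 * π) • ((Real.log lam / (2 * π)) • (!![1, 0; 0, -1] : Matrix (Fin 2) (Fin 2) ℝ)))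
      = !![lam, 0; 0, lam⁻¹] ∧
    (∀ σ : ℝ,
      (∃ e : Fin 2 → ℂ, e ≠ 0 ∧
        exp (((2 * π : ℝ) : ℂ) •
            (-(σ : ℂ) • J0.map Complex.ofReal +
              ((Real.log lam / (2 * π)) •
                (!![1, 0; 0, -1] : Matrix (Fin 2) (Fin 2) ℝ)).map Complex.ofReal)) *ᵥ e = e) ↔
      ∃ k : ℤ, 4 * π ^ 2 * σ ^ 2 = Real.log lam ^ 2 + 4 * π ^ 2 * (k : ℝ) ^ 2) ∧
    (∀ σ : ℝ,
      (∃ e : Fin 2 → ℂ, e ≠ 0 ∧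
        exp (((2 * π : ℝ) : ℂ) •
            (-(σ : ℂ) • J0.map Complex.ofReal +
              ((Real.log lam / (2 * π)) •
                (!![1, 0; 0, -1] : Matrix (Fin 2) (Fin 2) ℝ)).map Complex.ofReal)) *ᵥ e = e) ↔
      (∃ e : Fin 2 → ℂ, e ≠ 0 ∧
        exp (((2 * π : ℝ) : ℂ) •
            (-((-σ : ℝ) : ℂ) • J0.map Complex.ofReal +
              ((Real.log lam / (2 * π)) •
                (!![1, 0; 0, -1] : Matrix (Fin 2) (Fin 2) ℝ)).map Complex.ofReal)) *ᵥ e = e)) := by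
  have hπ : (π : ℝ) ≠ 0 := Real.pi_ne_zero
  have hb : Real.log lam ≠ 0 := by
    intro h
    apply hlam1
    have h2 := Real.exp_log hlam
    rw [h] at h2
    simpa using h2.symm
  have hM : ∀ σ : ℝ,
      ((2 * π : ℝ) : ℂ) •
          (-(σ : ℂ) • J0.map Complex.ofReal +
            ((Real.log lam / (2 * π)) •
              (!![1, 0; 0, -1] : Matrix (Fin 2) (Fin 2) ℝ)).map Complex.ofReal)
        = !![((Real.log lam : ℝ) : ℂ), ((2 * π * σ : ℝ) : ℂ);
            -((2 * π * σ : ℝ) : ℂ), -((Real.log lam : ℝ) : ℂ)] := by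
    intro σ
    have hπC : ((π : ℝ) : ℂ) ≠ 0 := Complex.ofReal_ne_zero.mpr hπ
    ext i j
    fin_cases i <;> fin_cases j <;>
      simp [J0, Matrix.map_apply] <;> push_cast <;> (try field_simp) <;> (try ring)
  have h2 : ∀ σ : ℝ,
      (∃ e : Fin 2 → ℂ, e ≠ 0 ∧
        exp (((2 * π : ℝ) : ℂ) •
            (-(σ : ℂ) • J0.map Complex.ofReal +
              ((Real.log lam / (2 * π)) •
                (!![1, 0; 0, -1] : Matrix (Fin 2) (Fin 2) ℝ)).map Complex.ofReal)) *ᵥ e = e) ↔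
      ∃ k : ℤ, 4 * π ^ 2 * σ ^ 2 = Real.log lam ^ 2 + 4 * π ^ 2 * (k : ℝ) ^ 2 := by
    intro σ
    rw [hM σ, key (Real.log lam) (2 * π * σ) hb]
    constructor <;> rintro ⟨k, hk⟩ <;> exact ⟨k, by linear_combination hk⟩
  refine ⟨?_, h2, ?_⟩
  · have hD : (2 * π) • ((Real.log lam / (2 * π)) •
        (!![1, 0; 0, -1] : Matrix (Fin 2) (Fin 2) ℝ))
        = Matrix.diagonal ![Real.log lam, -Real.log lam] := by
      ext i j
      fin_cases i <;> fin_cases j <;>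
        simp [Matrix.diagonal] <;> (try field_simp)
    rw [hD, Matrix.exp_diagonal]
    ext i j
    fin_cases i <;> fin_cases j <;>
      simp [Matrix.diagonal, Pi.exp_def, ← Real.exp_eq_exp_ℝ, Real.exp_log hlam,
        Real.exp_neg]
  · intro σ
    rw [h2 σ, h2 (-σ)]
    constructor <;> rintro ⟨k, hk⟩ <;> exact ⟨k, by linear_combination hk⟩
end

section
/- Let μ ∈ ℝ, let J₀ = ((0, −1), (1, 0)), and let B = ((0, μ/2π), (0, 0)), so that L = exp(2πB) = ((1, μ), (0, 1)). Then for σ ∈ ℝ, there exists a nonzero e ∈ ℂ² with exp(2π(−σJ₀ + B))·e = e if and only if there exists k ∈ ℤ with 2πσ·(2πσ + μ) = 4π²k², equivalently σ = −μ/(4π) ± (1/2π)·(μ²/4 + 4π²k²)^{1/2} for some integer k ≥ 0. -/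
open Matrix Real NormedSpace

lemma exp_of_sq_zero {𝕂 𝔸 : Type*} [Field 𝕂] [CharZero 𝕂] [Ring 𝔸] [Algebra 𝕂 𝔸]
    [TopologicalSpace 𝔸] [IsTopologicalRing 𝔸] [T2Space 𝔸] (a : 𝔸) (h : a ^ 2 = 0) :
    exp a = 1 + a := by
  rw [exp_eq_tsum 𝕂]
  simp only []
  rw [tsum_eq_sum (s := {0, 1}) ?_]
  · simp
  · intro b hb
    simp only [Finset.mem_insert, Finset.mem_singleton] at hb
    obtain ⟨c, rfl⟩ : ∃ c, b = 2 + c := ⟨b - 2, by omega⟩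
    rw [pow_add, h, zero_mul, smul_zero]

lemma exp_form (a b z : ℂ) (hb : b ≠ 0) (hz : z ≠ 0) (h : z ^ 2 = -(a * b)) :
    exp !![0, b; -a, 0] =
      !![b, b; z, -z] * diagonal ![Complex.exp z, Complex.exp (-z)] * !![b, b; z, -z]⁻¹ := by
  set P : Matrix (Fin 2) (Fin 2) ℂ := !![b, b; z, -z] with hP
  have hdet : P.det ≠ 0 := by
    have : P.det = -(2 * (b * z)) := by simp [hP, Matrix.det_fin_two_of]; ring
    rw [this]
    simp [hb, hz]
  have hU : IsUnit P := (Matrix.isUnit_iff_isUnit_det P).mpr hdet.isUnit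
  have key : !![0, b; -a, 0] = P * diagonal ![z, -z] * P⁻¹ := by
    have hmul : !![0, b; -a, 0] * P = P * diagonal ![z, -z] := by
      ext i j
      fin_cases i <;> fin_cases j <;>
        simp [hP, Matrix.mul_apply, Fin.sum_univ_two, Matrix.diagonal] <;> linear_combination -h
    calc !![0, b; -a, 0] = !![0, b; -a, 0] * P * P⁻¹ := by
          rw [Matrix.mul_nonsing_inv_cancel_right _ _ hdet.isUnit]
      _ = P * diagonal ![z, -z] * P⁻¹ := by rw [hmul]
  have hexp : exp (![z, -z] : Fin 2 → ℂ) = ![Complex.exp z, Complex.exp (-z)] := by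
    rw [Pi.exp_def]
    ext i
    fin_cases i <;> simp [Complex.exp_eq_exp_ℂ]
  rw [key, Matrix.exp_conj P _ hU, Matrix.exp_diagonal, hexp]

lemma det_exp_sub_one (a b z : ℂ) (hb : b ≠ 0) (hz : z ≠ 0) (h : z ^ 2 = -(a * b)) :
    (exp !![0, b; -a, 0] - 1).det = (Complex.exp z - 1) * (Complex.exp (-z) - 1) := by
  set P : Matrix (Fin 2) (Fin 2) ℂ := !![b, b; z, -z] with hP
  have hdet : P.det ≠ 0 := by
    have : P.det = -(2 * (b * z)) := by simp [hP, Matrix.det_fin_two_of]; ring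
    rw [this]; simp [hb, hz]
  have h1 : exp !![0, b; -a, 0] - 1
      = P * (diagonal ![Complex.exp z, Complex.exp (-z)] - 1) * P⁻¹ := by
    rw [exp_form a b z hb hz h, Matrix.mul_sub, Matrix.sub_mul, Matrix.mul_one,
      Matrix.mul_nonsing_inv _ hdet.isUnit]
  rw [h1, Matrix.det_mul, Matrix.det_mul, Matrix.det_nonsing_inv]
  have h2 : (diagonal ![Complex.exp z, Complex.exp (-z)] - 1 : Matrix (Fin 2) (Fin 2) ℂ)
      = diagonal ![Complex.exp z - 1, Complex.exp (-z) - 1] := by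
    ext i j
    fin_cases i <;> fin_cases j <;> simp [Matrix.diagonal, Matrix.one_apply]
  rw [h2, Matrix.det_diagonal, Ring.inverse_eq_inv']
  rw [mul_comm P.det, mul_assoc, mul_inv_cancel₀ hdet, mul_one]
  simp [Fin.prod_univ_two]

/-- **parabolic case, `n = 1`.** With `B = ((0, μ/2π), (0, 0))` (so
`exp(2πB) = ((1, μ), (0, 1))`), for `σ ∈ ℝ` the matrix `exp(2π(−σJ₀ + B))` has a nonzero
fixed vector in `ℂ²` iff `2πσ(2πσ + μ) = 4π²k²` for some `k ∈ ℤ`. -/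
theorem parabolic_eigenvalue_equation (μ : ℝ) :
    exp ((2 * π) • (!![0, μ / (2 * π); 0, 0] : Matrix (Fin 2) (Fin 2) ℝ))
      = !![1, μ; 0, 1] ∧
    (∀ σ : ℝ,
      (∃ e : Fin 2 → ℂ, e ≠ 0 ∧
        exp (((2 * π : ℝ) : ℂ) •
            (-(σ : ℂ) • J0.map Complex.ofReal +
              (!![0, μ / (2 * π); 0, 0] : Matrix (Fin 2) (Fin 2) ℝ).map Complex.ofReal)) *ᵥ e
          = e) ↔
      ∃ k : ℤ, (2 * π * σ) * (2 * π * σ + μ) = 4 * π ^ 2 * (k : ℝ) ^ 2) := by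
  have hπ := Real.pi_ne_zero
  have hπC : (π : ℂ) ≠ 0 := Complex.ofReal_ne_zero.mpr hπ
  constructor
  · have h2 : (2 * π) • (!![0, μ / (2 * π); 0, 0] : Matrix (Fin 2) (Fin 2) ℝ)
        = !![0, μ; 0, 0] := by
      ext i j; fin_cases i <;> fin_cases j <;> simp <;> field_simp
    rw [h2, exp_of_sq_zero (𝕂 := ℝ)]
    · norm_num [Matrix.one_fin_two, ← Matrix.ext_iff, Fin.forall_fin_two]
    · ext i j
      fin_cases i <;> fin_cases j <;> simp [pow_two, Matrix.mul_apply, Fin.sum_univ_two]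
  · intro σ
    set a : ℂ := ((2 * π * σ : ℝ) : ℂ) with ha
    set b : ℂ := ((2 * π * σ + μ : ℝ) : ℂ) with hb
    have hA : (((2 * π : ℝ) : ℂ) •
        (-(σ : ℂ) • J0.map Complex.ofReal +
          (!![0, μ / (2 * π); 0, 0] : Matrix (Fin 2) (Fin 2) ℝ).map Complex.ofReal))
        = !![0, b; -a, 0] := by
      ext i j
      fin_cases i <;> fin_cases j <;>
        simp [J0, ha, hb, Matrix.map_apply]
      all_goals try push_cast
      all_goals try field_simp [hπC]
      all_goals try ring
    rw [hA]
    constructor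
    · rintro ⟨e, he, hfix⟩
      by_cases hc : 2 * π * σ * (2 * π * σ + μ) = 0
      · exact ⟨0, by simpa using hc⟩
      · have haR : (2 * π * σ : ℝ) ≠ 0 := fun h => hc (by rw [h]; ring)
        have hbR : (2 * π * σ + μ : ℝ) ≠ 0 := fun h => hc (by rw [h]; ring)
        have ha0 : a ≠ 0 := by rw [ha]; exact Complex.ofReal_ne_zero.mpr haR
        have hb0 : b ≠ 0 := by rw [hb]; exact Complex.ofReal_ne_zero.mpr hbR
        obtain ⟨z, hz2⟩ : ∃ z : ℂ, z ^ 2 = -(a * b) :=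
          ⟨(-(a * b)) ^ ((2 : ℕ)⁻¹ : ℂ), by
            exact_mod_cast Complex.cpow_nat_inv_pow _ two_ne_zero⟩
        have hz0 : z ≠ 0 := by
          intro h0
          rw [h0] at hz2
          simp at hz2
          tauto
        have hdet0 : (exp !![0, b; -a, 0] - 1).det = 0 := by
          rw [← Matrix.exists_mulVec_eq_zero_iff]
          exact ⟨e, he, by rw [Matrix.sub_mulVec, hfix, Matrix.one_mulVec, sub_self]⟩
        rw [det_exp_sub_one a b z hb0 hz0 hz2] at hdet0
        rcases mul_eq_zero.mp hdet0 with h1 | h1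
        · obtain ⟨n, hn⟩ := Complex.exp_eq_one_iff.mp (sub_eq_zero.mp h1)
          refine ⟨n, ?_⟩
          have h3 : (z : ℂ) ^ 2 = -(((4 * π ^ 2 * (n : ℝ) ^ 2 : ℝ)) : ℂ) := by
            rw [hn]; push_cast
            linear_combination (4 * (π : ℂ) ^ 2 * (n : ℂ) ^ 2) * Complex.I_sq
          rw [hz2] at h3
          have h4 := neg_injective h3
          rw [ha, hb] at h4
          exact_mod_cast h4
        · obtain ⟨n, hn⟩ := Complex.exp_eq_one_iff.mp (sub_eq_zero.mp h1)
          refine ⟨n, ?_⟩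
          have h3 : (z : ℂ) ^ 2 = -(((4 * π ^ 2 * (n : ℝ) ^ 2 : ℝ)) : ℂ) := by
            have hzz : z = -((n : ℂ) * (2 * π * Complex.I)) := by rw [← hn]; ring
            rw [hzz]; push_cast
            linear_combination (4 * (π : ℂ) ^ 2 * (n : ℂ) ^ 2) * Complex.I_sq
          rw [hz2] at h3
          have h4 := neg_injective h3
          rw [ha, hb] at h4
          exact_mod_cast h4
    · rintro ⟨k, hk⟩
      by_cases hc : 2 * π * σ * (2 * π * σ + μ) = 0
      · have hab : a * b = 0 := by
          rw [ha, hb]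
          exact_mod_cast congrArg Complex.ofReal hc
        have hdetA : (!![0, b; -a, 0] : Matrix (Fin 2) (Fin 2) ℂ).det = 0 := by
          rw [Matrix.det_fin_two_of]; linear_combination hab
        obtain ⟨e, he, hker⟩ := (Matrix.exists_mulVec_eq_zero_iff).mpr hdetA
        have hsq : (!![0, b; -a, 0] : Matrix (Fin 2) (Fin 2) ℂ) ^ 2 = 0 := by
          ext i j
          fin_cases i <;> fin_cases j <;>
            simp [pow_two, Matrix.mul_apply, Fin.sum_univ_two, -mul_eq_zero] <;>
            first
              | linear_combination hab
              | linear_combination -hab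
        refine ⟨e, he, ?_⟩
        rw [exp_of_sq_zero (𝕂 := ℂ) _ hsq, Matrix.add_mulVec, Matrix.one_mulVec, hker, add_zero]
      · have hk0 : (k : ℝ) ≠ 0 := by
          intro h0
          exact hc (by rw [hk, h0]; ring)
        have hbR : (2 * π * σ + μ : ℝ) ≠ 0 := fun h => hc (by rw [h]; ring)
        have hb0 : b ≠ 0 := by rw [hb]; exact Complex.ofReal_ne_zero.mpr hbR
        set z : ℂ := (k : ℂ) * (2 * π * Complex.I) with hzdef
        have hz0 : z ≠ 0 := by
          simp [hzdef, Complex.ext_iff, hπ]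
          exact_mod_cast hk0
        have hz2 : z ^ 2 = -(a * b) := by
          have : a * b = ((4 * π ^ 2 * (k : ℝ) ^ 2 : ℝ) : ℂ) := by
            rw [ha, hb, ← Complex.ofReal_mul, hk]
          rw [this, hzdef]; push_cast
          linear_combination (4 * (π : ℂ) ^ 2 * (k : ℂ) ^ 2) * Complex.I_sq
        have hez : Complex.exp z = 1 := by
          rw [hzdef]; exact Complex.exp_int_mul_two_pi_mul_I k
        have hez' : Complex.exp (-z) = 1 := by
          have : -z = ((-k : ℤ) : ℂ) * (2 * π * Complex.I) := by rw [hzdef]; push_cast; ring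
          rw [this]; exact Complex.exp_int_mul_two_pi_mul_I (-k)
        have hexpA : exp !![0, b; -a, 0] = 1 := by
          rw [exp_form a b z hb0 hz0 hz2, hez, hez']
          have hD : (diagonal ![(1 : ℂ), 1] : Matrix (Fin 2) (Fin 2) ℂ) = 1 := by
            ext i j; fin_cases i <;> fin_cases j <;> simp [Matrix.diagonal, Matrix.one_apply]
          rw [hD, Matrix.mul_one]
          apply Matrix.mul_nonsing_inv
          have : (!![b, b; z, -z] : Matrix (Fin 2) (Fin 2) ℂ).det = -(2 * (b * z)) := by
            simp [Matrix.det_fin_two_of]; ring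
          rw [this]
          exact (by simp [hb0, hz0] : (-(2 * (b * z)) : ℂ) ≠ 0).isUnit
        exact ⟨![1, 0], by
          intro h0
          have := congrFun h0 0
          simp at this, by rw [hexpA, Matrix.one_mulVec]⟩
end

section
/- Let U be the 2n×2n complex matrix with block form ((−iIₙ, iIₙ), (Iₙ, Iₙ)). Let L ∈ Sp(2n, ℝ) and write U⁻¹LU = ((a, b), (conj(b), conj(a))) for complex n×n matrices a, b. Let W₀ be a complex symmetric n×n matrix with Iₙ − conj(W₀)·W₀ positive semidefinite, and let W ∈ D^{III}_n. Suppose that conj(b)·W + conj(a) is invertible, that L(W) := (a·W + b)·(conj(b)·W + conj(a))⁻¹ lies in D^{III}_n, and that the fixed-point equation a·W₀ + b = W₀·(conj(b)·W₀ + conj(a)) holds. Then det(conj(W₀)·L(W) − Iₙ) ≠ 0, det(conj(a) − conj(W₀)·b) ≠ 0, and |det(conj(W₀)·L(W) − Iₙ)|⁻² · det(Iₙ − conj(L(W))·L(W)) = |det(conj(a) − conj(W₀)·b)|⁻² · |det(conj(W₀)·W − Iₙ)|⁻² · det(Iₙ − conj(W)·W). Equivalently, the Kähler potential ψ_{W₀}(W)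 = −log(|det(conj(W₀)·W − Iₙ)|⁻² · det(Iₙ − conj(W)·W)) satisfies ψ_{W₀}(L(W)) = ψ_{W₀}(W) + 2·log|det(conj(a) − conj(W₀)·b)|. -/
open Matrix
open scoped ComplexOrder

/-- Entrywise complex conjugation of a complex matrix. -/
def mconj {m k : Type*} (W : Matrix m k ℂ) : Matrix m k ℂ :=
  W.map (starRingEnd ℂ)

/-- The bounded symmetric domain of type III (Siegel disk):
symmetric complex `n×n` matrices with `Iₙ − conj(W)·W` positive definite. -/
def SiegelDisk (n : ℕ) : Set (Matrix (Fin n) (Fin n) ℂ) :=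
  {W | Wᵀ = W ∧ (1 - mconj W * W).PosDef}

/-- The matrix `A = −(Iₙ − W conj(W))⁻¹ (Iₙ + W conj(W))`. -/
noncomputable def matA {n : ℕ} (W : Matrix (Fin n) (Fin n) ℂ) : Matrix (Fin n) (Fin n) ℂ :=
  -((1 - W * mconj W)⁻¹ * (1 + W * mconj W))

/-- The matrix `B = 2 (Iₙ − W conj(W))⁻¹ W`. -/
noncomputable def matB {n : ℕ} (W : Matrix (Fin n) (Fin n) ℂ) : Matrix (Fin n) (Fin n) ℂ :=
  (2 : ℂ) • ((1 - W * mconj W)⁻¹ * W)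

/-- The matrix `U = ((−iIₙ, iIₙ), (Iₙ, Iₙ))`. -/
noncomputable def matU (n : ℕ) : Matrix (Fin n ⊕ Fin n) (Fin n ⊕ Fin n) ℂ :=
  Matrix.fromBlocks (-Complex.I • 1) (Complex.I • 1) 1 1

/-! ### Auxiliary lemmas -/

section Aux

variable {n : ℕ}

lemma mconj_mul (A B : Matrix (Fin n) (Fin n) ℂ) :
    mconj (A * B) = mconj A * mconj B := Matrix.map_mul

lemma mconj_add (A B : Matrix (Fin n) (Fin n) ℂ) :
    mconj (A + B) = mconj A + mconj B := by
  ext i j; simp [mconj]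

lemma mconj_mconj (A : Matrix (Fin n) (Fin n) ℂ) : mconj (mconj A) = A := by
  ext i j; simp [mconj]

lemma mconj_transpose (A : Matrix (Fin n) (Fin n) ℂ) : mconj (Aᵀ) = (mconj A)ᵀ := by
  ext i j; simp [mconj]

lemma det_mconj (A : Matrix (Fin n) (Fin n) ℂ) : (mconj A).det = star A.det :=
  ((starRingEnd ℂ).map_det A).symm

lemma mconj_mulVec (A : Matrix (Fin n) (Fin n) ℂ) (u : Fin n → ℂ) :
    mconj A *ᵥ u = star (A *ᵥ star u) := by
  funext i
  simp [mconj, Matrix.mulVec, dotProduct, map_sum]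

lemma mconj_eq_conjTranspose {A : Matrix (Fin n) (Fin n) ℂ} (h : Aᵀ = A) :
    mconj A = Aᴴ := by
  ext i j
  have h2 : A j i = A i j := by rw [show A j i = Aᵀ i j from rfl, h]
  simp [mconj, Matrix.conjTranspose_apply, h2]

/-- Key nondegeneracy lemma: if `‖W₀‖ ≤ 1` and `V` is in the Siegel disk then
`conj(W₀) V − 1` is nonsingular. -/
lemma det_boundary_ne_zero {W₀ V : Matrix (Fin n) (Fin n) ℂ}
    (hW₀sym : W₀ᵀ = W₀) (hW₀ : (1 - mconj W₀ * W₀).PosSemidef)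
    (hVsym : Vᵀ = V) (hV : (1 - mconj V * V).PosDef) :
    (mconj W₀ * V - 1).det ≠ 0 := by
  intro hdet
  obtain ⟨v, hv0, hv⟩ := (Matrix.exists_mulVec_eq_zero_iff).2 hdet
  have hveq : mconj W₀ *ᵥ (V *ᵥ v) = v := by
    rw [Matrix.sub_mulVec, Matrix.one_mulVec, sub_eq_zero, ← Matrix.mulVec_mulVec] at hv
    exact hv
  set q : (Fin n → ℂ) → ℂ := fun x => dotProduct (star x) x with hq
  have hqle : ∀ x : Fin n → ℂ, q (W₀ *ᵥ x) ≤ q x := by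
    intro x
    have h := hW₀.dotProduct_mulVec_nonneg x
    rw [Matrix.sub_mulVec, Matrix.one_mulVec, dotProduct_sub, sub_nonneg] at h
    have h2 : dotProduct (star x) ((mconj W₀ * W₀) *ᵥ x) = q (W₀ *ᵥ x) := by
      rw [← Matrix.mulVec_mulVec, Matrix.dotProduct_mulVec, mconj_eq_conjTranspose hW₀sym,
        ← Matrix.star_mulVec]
    rwa [h2] at h
  have hqlt : q (V *ᵥ v) < q v := by
    have h := hV.dotProduct_mulVec_pos hv0
    rw [Matrix.sub_mulVec, Matrix.one_mulVec, dotProduct_sub, sub_pos] at h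
    have h2 : dotProduct (star v) ((mconj V * V) *ᵥ v) = q (V *ᵥ v) := by
      rw [← Matrix.mulVec_mulVec, Matrix.dotProduct_mulVec, mconj_eq_conjTranspose hVsym,
        ← Matrix.star_mulVec]
    rwa [h2] at h
  have hqstar : ∀ x : Fin n → ℂ, q (star x) = q x := by
    intro x
    simp only [hq, star_star, dotProduct_comm]
  have : q v < q v := by
    calc q v = q (mconj W₀ *ᵥ (V *ᵥ v)) := by rw [hveq]
    _ = q (star (W₀ *ᵥ star (V *ᵥ v))) := by rw [mconj_mulVec]
    _ = q (W₀ *ᵥ star (V *ᵥ v)) := hqstar _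
    _ ≤ q (star (V *ᵥ v)) := hqle _
    _ = q (V *ᵥ v) := hqstar _
    _ < q v := hqlt
  exact lt_irrefl _ this

/-- The complexified symplectic form. -/
noncomputable def OmegaC (n : ℕ) : Matrix (Fin n ⊕ Fin n) (Fin n ⊕ Fin n) ℂ :=
  Matrix.fromBlocks 0 1 (-1) 0

/-- Explicit inverse of `matU`. -/
noncomputable def matV (n : ℕ) : Matrix (Fin n ⊕ Fin n) (Fin n ⊕ Fin n) ℂ :=
  Matrix.fromBlocks ((Complex.I / 2) • 1) ((1 / 2 : ℂ) • 1)
    ((-(Complex.I) / 2) • 1) ((1 / 2 : ℂ) • 1)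

lemma matU_mul_matV (n : ℕ) : matU n * matV n = 1 := by
  rw [matU, matV, Matrix.fromBlocks_multiply, ← Matrix.fromBlocks_one]
  refine Matrix.fromBlocks_inj.mpr ⟨?_, ?_, ?_, ?_⟩ <;>
  · simp only [smul_mul_smul_comm, Matrix.smul_mul, Matrix.mul_smul, Matrix.one_mul,
      Matrix.mul_one, mul_one, one_mul]
    match_scalars <;> (ring_nf; try norm_num [Complex.I_sq])

lemma matV_mul_matU (n : ℕ) : matV n * matU n = 1 := by
  rw [matU, matV, Matrix.fromBlocks_multiply, ← Matrix.fromBlocks_one]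
  refine Matrix.fromBlocks_inj.mpr ⟨?_, ?_, ?_, ?_⟩ <;>
  · simp only [smul_mul_smul_comm, Matrix.smul_mul, Matrix.mul_smul, Matrix.one_mul,
      Matrix.mul_one, mul_one, one_mul]
    match_scalars <;> (ring_nf; try norm_num [Complex.I_sq])

lemma matU_omega (n : ℕ) : (matU n)ᵀ * OmegaC n * matU n = (-2 * Complex.I) • OmegaC n := by
  rw [matU, OmegaC, Matrix.fromBlocks_transpose, Matrix.fromBlocks_multiply,
    Matrix.fromBlocks_multiply, Matrix.fromBlocks_smul]
  refine Matrix.fromBlocks_inj.mpr ⟨?_, ?_, ?_, ?_⟩ <;>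
  · simp only [smul_mul_smul_comm, Matrix.smul_mul, Matrix.mul_smul, Matrix.one_mul,
      Matrix.mul_one, mul_one, one_mul, Matrix.transpose_smul, Matrix.transpose_one,
      Matrix.transpose_neg, Matrix.mul_zero, Matrix.zero_mul, Matrix.mul_neg, Matrix.neg_mul,
      smul_zero, smul_neg, add_zero, zero_add, neg_smul]
    match_scalars <;> (ring_nf; try norm_num [Complex.I_sq])

/-- The relations satisfied by the blocks of a symplectic matrix in the `U`-basis. -/
lemma symplectic_relations {n : ℕ}
    (L : Matrix (Fin n ⊕ Fin n) (Fin n ⊕ Fin n) ℝ)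
    (hL : Lᵀ * Omega0 n * L = Omega0 n)
    (a b : Matrix (Fin n) (Fin n) ℂ)
    (hab : (matU n)⁻¹ * L.map Complex.ofReal * matU n =
      Matrix.fromBlocks a b (mconj b) (mconj a)) :
    aᵀ * mconj b = (mconj b)ᵀ * a ∧ aᵀ * mconj a = 1 + (mconj b)ᵀ * b ∧
      bᵀ * mconj b = (mconj a)ᵀ * a - 1 ∧ bᵀ * mconj a = (mconj a)ᵀ * b := by
  set M : Matrix (Fin n ⊕ Fin n) (Fin n ⊕ Fin n) ℂ :=
    Matrix.fromBlocks a b (mconj b) (mconj a) with hM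
  set Lc := L.map Complex.ofReal with hLcdef
  have hUinv : (matU n)⁻¹ = matV n := Matrix.inv_eq_left_inv (matV_mul_matU n)
  rw [hUinv] at hab
  -- Lc = U M V
  have hLc : Lc = matU n * M * matV n := by
    calc Lc = (matU n * matV n) * Lc * (matU n * matV n) := by
          rw [matU_mul_matV]; rw [Matrix.one_mul, Matrix.mul_one]
    _ = matU n * (matV n * Lc * matU n) * matV n := by
          simp only [Matrix.mul_assoc]
    _ = matU n * M * matV n := by rw [hab]
  -- complexified symplectic relation
  have hLcsymp : Lcᵀ * OmegaC n * Lc = OmegaC n := by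
    have h := congrArg (fun X => X.map (Complex.ofRealHom : ℝ →+* ℂ)) hL
    simp only [Matrix.map_mul] at h
    have hT : (Lᵀ).map (Complex.ofRealHom : ℝ →+* ℂ) = ((L.map Complex.ofRealHom)ᵀ) := by
      ext i j; simp
    have hO : (Omega0 n).map (Complex.ofRealHom : ℝ →+* ℂ) = OmegaC n := by
      rw [Omega0, OmegaC, Matrix.fromBlocks_map]
      refine Matrix.fromBlocks_inj.mpr ⟨?_, ?_, ?_, ?_⟩ <;>
        · ext i j
          simp [Matrix.neg_apply, Matrix.one_apply, apply_ite]
    have hmap : L.map (Complex.ofRealHom : ℝ →+* ℂ) = Lc := rfl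
    rw [hT, hO, hmap] at h
    exact h
  rw [hLc] at hLcsymp
  -- M is OmegaC-symplectic
  have h5 : Mᵀ * ((matU n)ᵀ * OmegaC n * matU n) * M = (matU n)ᵀ * OmegaC n * matU n := by
    have hVUT : (matU n)ᵀ * (matV n)ᵀ = 1 := by
      rw [← Matrix.transpose_mul, matV_mul_matU, Matrix.transpose_one]
    conv_rhs => rw [← hLcsymp]
    simp only [Matrix.transpose_mul, Matrix.mul_assoc]
    rw [matV_mul_matU, Matrix.mul_one]
    rw [← Matrix.mul_assoc ((matU n)ᵀ) ((matV n)ᵀ), hVUT, Matrix.one_mul]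
  rw [matU_omega] at h5
  have hMsymp : Mᵀ * OmegaC n * M = OmegaC n := by
    have h6 : (-2 * Complex.I) • (Mᵀ * OmegaC n * M) = (-2 * Complex.I) • OmegaC n := by
      rw [← h5]
      simp only [Matrix.mul_smul, Matrix.smul_mul]
    have h2i : (-2 * Complex.I) ≠ 0 := by simp [Complex.I_ne_zero]
    exact smul_right_injective _ h2i h6
  -- expand blocks
  rw [hM, OmegaC, Matrix.fromBlocks_transpose, Matrix.fromBlocks_multiply,
    Matrix.fromBlocks_multiply] at hMsymp
  obtain ⟨h11, h12, h21, h22⟩ := Matrix.fromBlocks_inj.mp hMsymp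
  simp only [Matrix.mul_zero, Matrix.mul_one, Matrix.mul_neg, Matrix.zero_mul, Matrix.one_mul,
    Matrix.neg_mul, zero_add, add_zero] at h11 h12 h21 h22
  refine ⟨?_, ?_, ?_, ?_⟩
  · exact add_left_cancel (a := -((mconj b)ᵀ * a))
      (by rw [h11]; abel)
  · exact add_left_cancel (a := -((mconj b)ᵀ * b))
      (by rw [h12]; abel)
  · exact add_left_cancel (a := -((mconj a)ᵀ * a))
      (by rw [h21]; abel)
  · exact add_left_cancel (a := -((mconj a)ᵀ * b))
      (by rw [h22]; abel)

end Aux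

/-- Equivariance (up to constants) of the Kähler potential
`ψ_{W₀}(W) = −log(|det(conj(W₀)W − Iₙ)|⁻² · det(Iₙ − conj(W)W))` under the action of a
symplectic transformation `L` fixing the boundary point `W₀`. -/
theorem kahler_potential_equivariance {n : ℕ}
    (L : Matrix (Fin n ⊕ Fin n) (Fin n ⊕ Fin n) ℝ)
    (hL : Lᵀ * Omega0 n * L = Omega0 n)
    (a b : Matrix (Fin n) (Fin n) ℂ)
    (hab : (matU n)⁻¹ * L.map Complex.ofReal * matU n =
      Matrix.fromBlocks a b (mconj b) (mconj a))
    (W₀ : Matrix (Fin n) (Fin n) ℂ) (hW₀sym : W₀ᵀ = W₀)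
    (hW₀ : (1 - mconj W₀ * W₀).PosSemidef)
    (W : Matrix (Fin n) (Fin n) ℂ) (hW : W ∈ SiegelDisk n)
    (hden : IsUnit (mconj b * W + mconj a))
    (LW : Matrix (Fin n) (Fin n) ℂ)
    (hLW : LW = (a * W + b) * (mconj b * W + mconj a)⁻¹)
    (hLWdisk : LW ∈ SiegelDisk n)
    (hfix : a * W₀ + b = W₀ * (mconj b * W₀ + mconj a)) :
    (mconj W₀ * LW - 1).det ≠ 0 ∧
    (mconj a - mconj W₀ * b).det ≠ 0 ∧
    (↑(‖(mconj W₀ * LW - 1).det‖ ^ 2))⁻¹ * (1 - mconj LW * LW).det =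
      (↑(‖(mconj a - mconj W₀ * b).det‖ ^ 2))⁻¹ *
        ((↑(‖(mconj W₀ * W - 1).det‖ ^ 2))⁻¹ * (1 - mconj W * W).det) ∧
    -Real.log ((‖(mconj W₀ * LW - 1).det‖ ^ 2)⁻¹ * (1 - mconj LW * LW).det.re) =
      -Real.log ((‖(mconj W₀ * W - 1).det‖ ^ 2)⁻¹ * (1 - mconj W * W).det.re) +
        2 * Real.log (‖(mconj a - mconj W₀ * b).det‖) := by
  obtain ⟨e1, e2, e4, e3⟩ := symplectic_relations L hL a b hab
  obtain ⟨hWsym, hWpd⟩ := hW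
  obtain ⟨hLWsym, hLWpd⟩ := hLWdisk
  have hDdet : IsUnit (mconj b * W + mconj a).det :=
    (Matrix.isUnit_iff_isUnit_det _).mp hden
  have hND : LW * (mconj b * W + mconj a) = a * W + b := by
    rw [hLW, Matrix.mul_assoc, Matrix.nonsing_inv_mul _ hDdet, Matrix.mul_one]
  -- E2
  have hE2 : (mconj W₀ * LW - 1) * (mconj b * W + mconj a) =
      (mconj a - mconj W₀ * b) * (mconj W₀ * W - 1) := by
    have h := congrArg mconj hfix
    simp only [mconj_mul, mconj_add, mconj_mconj] at h
    have h2 : mconj W₀ * b * mconj W₀ + mconj W₀ * a = mconj a * mconj W₀ + mconj b := by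
      rw [h]; noncomm_ring
    have e5 : mconj W₀ * a = mconj a * mconj W₀ + mconj b - mconj W₀ * b * mconj W₀ := by
      rw [← h2]; noncomm_ring
    calc (mconj W₀ * LW - 1) * (mconj b * W + mconj a)
        = mconj W₀ * (LW * (mconj b * W + mconj a)) - (mconj b * W + mconj a) := by
          noncomm_ring
    _ = (mconj W₀ * a) * W + mconj W₀ * b - (mconj b * W + mconj a) := by
          rw [hND]; noncomm_ring
    _ = (mconj a * mconj W₀ + mconj b - mconj W₀ * b * mconj W₀) * W + mconj W₀ * b -
          (mconj b * W + mconj a) := by rw [e5]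
    _ = (mconj a - mconj W₀ * b) * (mconj W₀ * W - 1) := by noncomm_ring
  -- determinants nonzero
  have hdW : (mconj W₀ * W - 1).det ≠ 0 :=
    det_boundary_ne_zero hW₀sym hW₀ hWsym hWpd
  have hdLW : (mconj W₀ * LW - 1).det ≠ 0 :=
    det_boundary_ne_zero hW₀sym hW₀ hLWsym hLWpd
  have hdD : (mconj b * W + mconj a).det ≠ 0 := hDdet.ne_zero
  have hdet2 : (mconj W₀ * LW - 1).det * (mconj b * W + mconj a).det =
      (mconj a - mconj W₀ * b).det * (mconj W₀ * W - 1).det := by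
    rw [← Matrix.det_mul, ← Matrix.det_mul, hE2]
  have hdE : (mconj a - mconj W₀ * b).det ≠ 0 := by
    intro h0
    exact (mul_ne_zero hdLW hdD) (hdet2.trans (by rw [h0, zero_mul]))
  -- E3
  have hDm : mconj (mconj b * W + mconj a) = b * mconj W + a := by
    rw [mconj_add, mconj_mul, mconj_mconj, mconj_mconj]
  have hNm : mconj (a * W + b) = mconj a * mconj W + mconj b := by
    rw [mconj_add, mconj_mul]
  have hmWsym : (mconj W)ᵀ = mconj W := by rw [← mconj_transpose, hWsym]
  have hmLWsym : (mconj LW)ᵀ = mconj LW := by rw [← mconj_transpose, hLWsym]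
  have hDmT : (mconj (mconj b * W + mconj a))ᵀ = mconj W * bᵀ + aᵀ := by
    rw [hDm, Matrix.transpose_add, Matrix.transpose_mul, hmWsym]
  have hNmT : (mconj (a * W + b))ᵀ = mconj W * (mconj a)ᵀ + (mconj b)ᵀ := by
    rw [hNm, Matrix.transpose_add, Matrix.transpose_mul, hmWsym]
  have hstar : (mconj (mconj b * W + mconj a))ᵀ * (mconj b * W + mconj a) -
      (mconj (a * W + b))ᵀ * (a * W + b) = 1 - mconj W * W := by
    rw [hDmT, hNmT]
    calc (mconj W * bᵀ + aᵀ) * (mconj b * W + mconj a) -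
          (mconj W * (mconj a)ᵀ + (mconj b)ᵀ) * (a * W + b)
        = mconj W * (bᵀ * mconj b) * W + mconj W * (bᵀ * mconj a) +
            (aᵀ * mconj b) * W + (aᵀ * mconj a) -
            (mconj W * ((mconj a)ᵀ * a) * W + mconj W * ((mconj a)ᵀ * b) +
              ((mconj b)ᵀ * a) * W + ((mconj b)ᵀ * b)) := by noncomm_ring
    _ = 1 - mconj W * W := by rw [e1, e2, e3, e4]; noncomm_ring
  have h6 : (mconj (mconj b * W + mconj a))ᵀ * mconj LW = (mconj (a * W + b))ᵀ := by
    have h7 : mconj LW * mconj (mconj b * W + mconj a) = mconj (a * W + b) := by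
      rw [← mconj_mul, hND]
    calc (mconj (mconj b * W + mconj a))ᵀ * mconj LW
        = (mconj (mconj b * W + mconj a))ᵀ * (mconj LW)ᵀ := by rw [hmLWsym]
    _ = (mconj LW * mconj (mconj b * W + mconj a))ᵀ := by rw [← Matrix.transpose_mul]
    _ = (mconj (a * W + b))ᵀ := by rw [h7]
  have hE3 : (mconj (mconj b * W + mconj a))ᵀ * (1 - mconj LW * LW) * (mconj b * W + mconj a) =
      1 - mconj W * W := by
    calc (mconj (mconj b * W + mconj a))ᵀ * (1 - mconj LW * LW) * (mconj b * W + mconj a)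
        = (mconj (mconj b * W + mconj a))ᵀ * (mconj b * W + mconj a) -
            ((mconj (mconj b * W + mconj a))ᵀ * mconj LW) *
              (LW * (mconj b * W + mconj a)) := by noncomm_ring
    _ = (mconj (mconj b * W + mconj a))ᵀ * (mconj b * W + mconj a) -
            (mconj (a * W + b))ᵀ * (a * W + b) := by rw [h6, hND]
    _ = 1 - mconj W * W := hstar
  have hdet3 : star (mconj b * W + mconj a).det * (1 - mconj LW * LW).det *
      (mconj b * W + mconj a).det = (1 - mconj W * W).det := by
    have h := congrArg Matrix.det hE3
    rwa [Matrix.det_mul, Matrix.det_mul, Matrix.det_transpose, det_mconj] at h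
  -- positivity of determinants
  have hd1pos : 0 < (1 - mconj LW * LW).det := hLWpd.det_pos
  have hd2pos : 0 < (1 - mconj W * W).det := hWpd.det_pos
  -- abbreviations
  set α := (mconj W₀ * LW - 1).det with hα
  set β := (mconj a - mconj W₀ * b).det with hβ
  set γ := (mconj W₀ * W - 1).det with hγ
  set δ := (mconj b * W + mconj a).det with hδ
  set d₁ := (1 - mconj LW * LW).det with hd₁
  set d₂ := (1 - mconj W * W).det with hd₂
  have habs : ∀ z : ℂ, (↑(‖z‖ ^ 2) : ℂ) = z * (starRingEnd ℂ) z := by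
    intro z
    rw [Complex.sq_norm]
    exact (Complex.mul_conj z).symm
  have hcα : (starRingEnd ℂ) α ≠ 0 := by simpa using hdLW
  have hcβ : (starRingEnd ℂ) β ≠ 0 := by simpa using hdE
  have hcγ : (starRingEnd ℂ) γ ≠ 0 := by simpa using hdW
  have hcδ : (starRingEnd ℂ) δ ≠ 0 := by simpa using hdD
  have hch2 : (starRingEnd ℂ) α * (starRingEnd ℂ) δ =
      (starRingEnd ℂ) β * (starRingEnd ℂ) γ := by
    simpa only [_root_.map_mul] using congrArg (starRingEnd ℂ) hdet2
  have hprod : (α * (starRingEnd ℂ) α) * (δ * (starRingEnd ℂ) δ) =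
      (β * (starRingEnd ℂ) β) * (γ * (starRingEnd ℂ) γ) := by
    linear_combination ((starRingEnd ℂ) α * (starRingEnd ℂ) δ) * hdet2 + (β * γ) * hch2
  have goal3 : (↑(‖α‖ ^ 2) : ℂ)⁻¹ * d₁ =
      (↑(‖β‖ ^ 2) : ℂ)⁻¹ * ((↑(‖γ‖ ^ 2) : ℂ)⁻¹ * d₂) := by
    rw [habs, habs, habs, ← hdet3]
    have hsδ : star δ = (starRingEnd ℂ) δ := rfl
    rw [hsδ]
    field_simp
    linear_combination (-1) * hprod
  refine ⟨hdLW, hdE, goal3, ?_⟩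
  -- real version
  have hd1re : d₁ = ((d₁.re : ℝ) : ℂ) := by
    have h := hd1pos
    rw [Complex.lt_def] at h
    exact (Complex.ext (by simp) (by simp [← h.2])).symm
  have hd2re : d₂ = ((d₂.re : ℝ) : ℂ) := by
    have h := hd2pos
    rw [Complex.lt_def] at h
    exact (Complex.ext (by simp) (by simp [← h.2])).symm
  have hd1repos : 0 < d₁.re := by
    have h := hd1pos; rw [Complex.lt_def] at h; simpa using h.1
  have hd2repos : 0 < d₂.re := by
    have h := hd2pos; rw [Complex.lt_def] at h; simpa using h.1
  have hrealeq : (‖α‖ ^ 2)⁻¹ * d₁.re =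
      (‖β‖ ^ 2)⁻¹ * ((‖γ‖ ^ 2)⁻¹ * d₂.re) := by
    have h := goal3
    rw [hd1re, hd2re] at h
    have : ((((‖α‖ ^ 2)⁻¹ * d₁.re : ℝ)) : ℂ) =
        (((‖β‖ ^ 2)⁻¹ * ((‖γ‖ ^ 2)⁻¹ * d₂.re) : ℝ) : ℂ) := by
      push_cast
      convert h using 2 <;> push_cast <;> ring
    exact_mod_cast this
  rw [hrealeq]
  have habsα : ‖α‖ ≠ 0 := by simpa using hdLW
  have habsβ : ‖β‖ ≠ 0 := by simpa using hdE
  have habsγ : ‖γ‖ ≠ 0 := by simpa using hdW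
  rw [Real.log_mul (by positivity) (by positivity), Real.log_inv, Real.log_pow]
  push_cast
  ring
end
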